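/- Let G be a directed network with primary costs γ (no circuit with non-positive total γ), secondary costs σ ≥ 0 (no circuit with negative total σ), and budget C_max. Then the minimum primary length over all feasible paths from source s to the sink set in G equals the minimum primary length over all paths from s^0 to sink copies in the expanded network G_E. -/

import Mathlib

def arcCost {V : Type*} (γ : V → V → ℤ) (p : List V) : ℤ :=
  ((p.zip p.tail).map fun q => γ q.1 q.2).sum

def IsWalk {V : Type*} (A : V → V → Prop) (i j : V) (p : List V) : Prop :=
  p.Chain' A ∧ p.head? = some i ∧ p.getLast? = some j

def IsPath {V : Type*} (A : V → V → Prop) (i j : V) (p : List V) : Prop :=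
  IsWalk A i j p ∧ p.Nodup

/-- A directed circuit: a walk of at least one arc whose first and last nodes coincide. -/
def IsCircuit {V : Type*} (A : V → V → Prop) (p : List V) : Prop :=
  p.Chain' A ∧ 2 ≤ p.length ∧ p.head? = p.getLast?
/-- Arcs of the expanded network `G_E`: node `(i,c)` (node `i` at secondary-cost level
`c`, `0 ≤ c`) is joined to `(j, c + σ i j)` whenever `(i,j)` is an arc of `G` and the
budget `Cmax` is not exceeded. -/
def ArcE {V : Type*} (A : V → V → Prop) (σ : V → V → ℤ) (Cmax : ℤ) :
    V × ℤ → V × ℤ → Prop :=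
  fun a b => A a.1 b.1 ∧ 0 ≤ a.2 ∧ b.2 = a.2 + σ a.1 b.1 ∧ b.2 ≤ Cmax

/-- Primary costs on the expanded network: an expanded arc inherits the cost of the
underlying arc. -/
def γE {V : Type*} (γ : V → V → ℤ) : V × ℤ → V × ℤ → ℤ :=
  fun a b => γ a.1 b.1

/-- A feasible path in the constrained network: a path whose every prefix has secondary
cost within the budget `Cmax` (hence so does the whole path). -/
def FeasiblePath {V : Type*} (A : V → V → Prop) (σ : V → V → ℤ) (Cmax : ℤ)
    (s t : V) (p : List V) : Prop :=
  IsPath A s t p ∧ ∀ q, q <+: p → arcCost σ q ≤ Cmax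

/-!
A feasible path lifts to `G_E` by pairing each node with the secondary cost of the prefix
ending there; as `σ ≥ 0` these levels only grow, so they stay in `[0, Cmax]`. Conversely a
walk in `G_E` from `(s, 0)` is the lift of its projection, whose secondary cost is the final
level. The projection need not be simple (zero-`σ` circuits), but cutting out circuits,
which have nonnegative `γ`- and `σ`-cost, leaves a feasible path that is no longer. So the
two sets of lengths have the same lower bounds and the same minimum.
-/

theorem List.Duplicate.exists_eq_append_cons_append_cons {α : Type*} {x : α} {l : List α}
    (h : List.Duplicate x l) : ∃ l₁ l₂ l₃, l = l₁ ++ x :: (l₂ ++ x :: l₃) := by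
  induction h with
  | cons_mem hx =>
    obtain ⟨l₂, l₃, rfl⟩ := List.append_of_mem hx
    exact ⟨[], l₂, l₃, rfl⟩
  | cons_duplicate _ ih =>
    obtain ⟨l₁, l₂, l₃, rfl⟩ := ih
    exact ⟨_ :: l₁, l₂, l₃, rfl⟩

theorem isLeast_iff_of_subset_of_forall_exists_le {α : Type*} [PartialOrder α] {s t : Set α}
    (hst : s ⊆ t) (hts : ∀ y ∈ t, ∃ x ∈ s, x ≤ y) {m : α} : IsLeast s m ↔ IsLeast t m := by
  constructor
  · rintro ⟨hm, hlb⟩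
    refine ⟨hst hm, fun y hy => ?_⟩
    obtain ⟨x, hx, hxy⟩ := hts y hy
    exact (hlb hx).trans hxy
  · rintro ⟨hm, hlb⟩
    obtain ⟨x, hx, hxm⟩ := hts m hm
    exact ⟨le_antisymm hxm (hlb (hst hx)) ▸ hx, fun y hy => hlb (hst hy)⟩

section arcCost

variable {V : Type*} {A : V → V → Prop}

@[simp] theorem arcCost_nil (f : V → V → ℤ) : arcCost f [] = 0 := rfl

@[simp] theorem arcCost_singleton (f : V → V → ℤ) (a : V) : arcCost f [a] = 0 := rfl

@[simp] theorem arcCost_cons_cons (f : V → V → ℤ) (a b : V) (l : List V) :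
    arcCost f (a :: b :: l) = f a b + arcCost f (b :: l) := by
  simp [arcCost]

theorem arcCost_append_cons (f : V → V → ℤ) (l₁ : List V) (a : V) (l₂ : List V) :
    arcCost f (l₁ ++ a :: l₂) = arcCost f (l₁ ++ [a]) + arcCost f (a :: l₂) := by
  induction l₁ using List.twoStepInduction with
  | nil => simp
  | singleton b => simp
  | cons_cons b c l _ ih => simp only [List.cons_append, arcCost_cons_cons] at ih ⊢; rw [ih c]; ring

theorem arcCost_append_cons_append_cons (f : V → V → ℤ) (l₁ : List V) (a : V)
    (l₂ l₃ : List V) :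
    arcCost f (l₁ ++ a :: (l₂ ++ a :: l₃)) =
      arcCost f (l₁ ++ a :: l₃) + arcCost f (a :: l₂ ++ [a]) := by
  rw [arcCost_append_cons f l₁ a (l₂ ++ a :: l₃), arcCost_append_cons f l₁ a l₃,
    ← List.cons_append, arcCost_append_cons f (a :: l₂) a l₃]
  ring

theorem arcCost_nonneg {σ : V → V → ℤ} (hσ : ∀ a b, A a b → 0 ≤ σ a b) {p : List V}
    (hp : p.IsChain A) : 0 ≤ arcCost σ p := by
  induction hp with
  | nil => rfl
  | singleton => rfl
  | cons_cons hab _ ih => rw [arcCost_cons_cons]; linarith [hσ _ _ hab]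

theorem arcCost_le_of_prefix {σ : V → V → ℤ} (hσ : ∀ a b, A a b → 0 ≤ σ a b)
    {p q : List V} (hp : p.IsChain A) (hqp : q <+: p) : arcCost σ q ≤ arcCost σ p := by
  obtain ⟨r, rfl⟩ := hqp
  rcases q.eq_nil_or_concat with rfl | ⟨q, a, rfl⟩
  · exact arcCost_nonneg hσ hp
  · simp only [List.concat_eq_append, List.append_assoc, List.singleton_append] at hp ⊢
    rw [arcCost_append_cons σ q a r]
    linarith [arcCost_nonneg hσ (hp.suffix (List.suffix_append q (a :: r)))]

theorem forall_prefix_arcCost_le_iff {σ : V → V → ℤ} (hσ : ∀ a b, A a b → 0 ≤ σ a b)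
    {p : List V} (hp : p.IsChain A) (C : ℤ) :
    (∀ q, q <+: p → arcCost σ q ≤ C) ↔ arcCost σ p ≤ C :=
  ⟨fun h => h p (List.prefix_refl p), fun h _ hq => (arcCost_le_of_prefix hσ hp hq).trans h⟩

end arcCost

section shortcut

variable {V : Type*} {A : V → V → Prop} {s t : V}

theorem IsWalk.isChain {p : List V} (hp : IsWalk A s t p) : p.IsChain A := hp.1

theorem IsCircuit.isChain {p : List V} (hp : IsCircuit A p) : p.IsChain A := hp.1

theorem IsWalk.remove_circuit {l₁ l₂ l₃ : List V} {a : V}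
    (hw : IsWalk A s t (l₁ ++ a :: (l₂ ++ a :: l₃))) :
    IsWalk A s t (l₁ ++ a :: l₃) ∧ IsCircuit A (a :: l₂ ++ [a]) := by
  obtain ⟨hc, hs, ht⟩ := hw
  obtain ⟨hc₁, hc₂⟩ := List.isChain_split.mp hc
  rw [← List.cons_append, List.isChain_split] at hc₂
  refine ⟨⟨List.isChain_split.mpr ⟨hc₁, hc₂.2⟩, by simpa using hs, ?_⟩, hc₂.1, by simp, ?_⟩
  · simpa [List.getLast?_cons] using ht
  · simp [List.getLast?_cons]

theorem IsWalk.exists_isPath_arcCost_le {p : List V} (hp : IsWalk A s t p) :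
    ∃ q, IsPath A s t q ∧
      ∀ f : V → V → ℤ, (∀ c, IsCircuit A c → 0 ≤ arcCost f c) → arcCost f q ≤ arcCost f p := by
  induction hlen : p.length using Nat.strong_induction_on generalizing p with
  | _ n ih =>
    by_cases hnd : p.Nodup
    · exact ⟨p, ⟨hp, hnd⟩, fun _ _ => le_rfl⟩
    obtain ⟨a, hdup⟩ := List.exists_duplicate_iff_not_nodup.mpr hnd
    obtain ⟨l₁, l₂, l₃, rfl⟩ := hdup.exists_eq_append_cons_append_cons
    obtain ⟨hw, hcirc⟩ := hp.remove_circuit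
    obtain ⟨q, hq, hcost⟩ := ih _ (by simp [← hlen]) hw rfl
    refine ⟨q, hq, fun f hf => ?_⟩
    rw [arcCost_append_cons_append_cons]
    linarith [hcost f hf, hf _ hcirc]

end shortcut

section expanded

variable {V : Type*} {A : V → V → Prop} {σ : V → V → ℤ} {Cmax : ℤ}

theorem arcCost_γE (γ : V → V → ℤ) (pE : List (V × ℤ)) :
    arcCost (γE γ) pE = arcCost γ (pE.map Prod.fst) := by
  induction pE using List.twoStepInduction with
  | nil => rfl
  | singleton => rfl
  | cons_cons a b l _ ih => simp only [List.map_cons, arcCost_cons_cons] at ih ⊢; rw [ih b]; rfl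

def liftE (σ : V → V → ℤ) : List V → ℤ → List (V × ℤ)
  | [], _ => []
  | [a], c => [(a, c)]
  | a :: b :: l, c => (a, c) :: liftE σ (b :: l) (c + σ a b)

@[simp] theorem map_fst_liftE (p : List V) (c : ℤ) : (liftE σ p c).map Prod.fst = p := by
  induction p, c using liftE.induct σ <;> simp_all [liftE]

@[simp] theorem head?_liftE (p : List V) (c : ℤ) :
    (liftE σ p c).head? = p.head?.map (·, c) := by
  induction p, c using liftE.induct σ <;> simp [liftE]

theorem getLast?_liftE (p : List V) (c : ℤ) :
    (liftE σ p c).getLast? = p.getLast?.map (·, c + arcCost σ p) := by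
  induction p, c using liftE.induct σ with
  | case1 => rfl
  | case2 => simp [liftE]
  | case3 a b l c ih =>
    rw [liftE, List.getLast?_cons, ih]
    simp [List.getLast?_cons, add_assoc]

theorem isChain_liftE (hσ : ∀ a b, A a b → 0 ≤ σ a b) {p : List V} (hp : p.IsChain A) {c : ℤ}
    (hc : 0 ≤ c) (hC : c + arcCost σ p ≤ Cmax) : (liftE σ p c).IsChain (ArcE A σ Cmax) := by
  induction hp generalizing c with
  | nil => simp [liftE]
  | singleton => simp [liftE]
  | cons_cons hab hl ih =>
    rw [arcCost_cons_cons] at hC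
    have hb := hσ _ _ hab
    have hrest := arcCost_nonneg hσ hl
    refine List.isChain_cons.mpr ⟨?_, ih (by linarith) (by linarith)⟩
    simpa [ArcE] using ⟨hab, hc, by linarith⟩

theorem eq_liftE_of_isChain_arcE {a : V} {c : ℤ} {l : List (V × ℤ)}
    (hl : ((a, c) :: l).IsChain (ArcE A σ Cmax)) :
    (a, c) :: l = liftE σ (a :: l.map Prod.fst) c := by
  induction l generalizing a c with
  | nil => rfl
  | cons x l ih =>
    obtain ⟨b, c'⟩ := x
    obtain ⟨⟨-, -, hc' : c' = c + σ a b, -⟩, hl⟩ := List.isChain_cons_cons.mp hl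
    subst hc'
    rw [List.map_cons, liftE, ← ih hl]

theorem IsWalk.of_arcE {s t : V} {c₀ c : ℤ} {pE : List (V × ℤ)}
    (hw : IsWalk (ArcE A σ Cmax) (s, c₀) (t, c) pE) :
    IsWalk A s t (pE.map Prod.fst) ∧ c = c₀ + arcCost σ (pE.map Prod.fst) := by
  obtain ⟨hc, hs, ht⟩ := hw
  obtain ⟨l, rfl⟩ : ∃ l, pE = (s, c₀) :: l := ⟨pE.tail, List.eq_cons_of_mem_head? hs⟩
  rw [eq_liftE_of_isChain_arcE hc, getLast?_liftE] at ht
  obtain ⟨t', ht', htc⟩ := Option.map_eq_some_iff.mp ht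
  obtain ⟨rfl, rfl⟩ := Prod.ext_iff.mp htc
  refine ⟨⟨List.isChain_map_of_isChain _ (fun _ _ h => h.1) hc, rfl, ht'⟩, rfl⟩

theorem FeasiblePath.isPath_liftE (hσ : ∀ a b, A a b → 0 ≤ σ a b) {s t : V} {p : List V}
    (hp : FeasiblePath A σ Cmax s t p) :
    IsPath (ArcE A σ Cmax) (s, 0) (t, arcCost σ p) (liftE σ p 0) := by
  obtain ⟨⟨⟨hc, hs, ht⟩, hnd⟩, hbudget⟩ := hp
  refine ⟨⟨isChain_liftE hσ hc le_rfl ?_, by simp [hs], by simp [getLast?_liftE, ht]⟩, ?_⟩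
  · simpa using hbudget p (List.prefix_refl p)
  · exact List.Nodup.of_map Prod.fst (by simpa using hnd)

theorem IsWalk.exists_feasiblePath_of_arcE (hσ : ∀ a b, A a b → 0 ≤ σ a b) {γ : V → V → ℤ}
    (hγ : ∀ p, IsCircuit A p → 0 ≤ arcCost γ p) {s t : V} {c : ℤ} {pE : List (V × ℤ)}
    (hw : IsWalk (ArcE A σ Cmax) (s, 0) (t, c) pE) (hc : c ≤ Cmax) :
    ∃ q, FeasiblePath A σ Cmax s t q ∧ arcCost γ q ≤ arcCost (γE γ) pE := by
  obtain ⟨hp, rfl⟩ := hw.of_arcE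
  obtain ⟨q, hq, hcost⟩ := hp.exists_isPath_arcCost_le
  have hσq := hcost σ fun _ hcirc => arcCost_nonneg hσ hcirc.isChain
  refine ⟨q, ⟨hq, (forall_prefix_arcCost_le_iff hσ hq.1.isChain Cmax).mpr (by linarith)⟩, ?_⟩
  exact (hcost γ hγ).trans_eq (arcCost_γE γ pE).symm

end expanded

theorem constrained_shortest_via_expanded_general {V : Type*} (A : V → V → Prop)
    (γ σ : V → V → ℤ) (Cmax : ℤ) (T : Set V) (s : V)
    (hσ : ∀ a b, A a b → 0 ≤ σ a b)
    (hcircγ : ∀ p, IsCircuit A p → 0 < arcCost γ p) :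
    ∀ m : ℤ,
      IsLeast {L : ℤ | ∃ t ∈ T, ∃ p, FeasiblePath A σ Cmax s t p ∧ arcCost γ p = L} m ↔
      IsLeast {L : ℤ | ∃ t ∈ T, ∃ c : ℤ, c ≤ Cmax ∧
        ∃ pE, IsPath (ArcE A σ Cmax) (s, 0) (t, c) pE ∧ arcCost (γE γ) pE = L} m := by
  intro m
  refine isLeast_iff_of_subset_of_forall_exists_le ?_ ?_
  · rintro _ ⟨t, ht, p, hp, rfl⟩
    refine ⟨t, ht, _, hp.2 p (List.prefix_refl p), liftE σ p 0, hp.isPath_liftE hσ, ?_⟩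
    rw [arcCost_γE, map_fst_liftE]
  · rintro _ ⟨t, ht, c, hc, pE, hpE, rfl⟩
    obtain ⟨q, hq, hle⟩ :=
      hpE.1.exists_feasiblePath_of_arcE hσ (fun p hp => (hcircγ p hp).le) hc
    exact ⟨_, ⟨t, ht, q, hq, rfl⟩, hle⟩

/-- the minimum primary length over feasible paths from the source `s` to
the sink set `T` in `G` equals the minimum primary length over paths from `(s,0)` to
sink copies in the expanded network `G_E`. -/
theorem constrained_shortest_via_expanded {V : Type*} (A : V → V → Prop)
    (γ σ : V → V → ℤ) (Cmax : ℤ) (T : Set V) (s : V)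
    (hσ : ∀ a b, A a b → 0 ≤ σ a b)
    (hcircγ : ∀ p, IsCircuit A p → 0 < arcCost γ p)
    (hcircσ : ∀ p, IsCircuit A p → 0 ≤ arcCost σ p) :
    ∀ m : ℤ,
      IsLeast {L : ℤ | ∃ t ∈ T, ∃ p, FeasiblePath A σ Cmax s t p ∧ arcCost γ p = L} m ↔
      IsLeast {L : ℤ | ∃ t ∈ T, ∃ c : ℤ, c ≤ Cmax ∧
        ∃ pE, IsPath (ArcE A σ Cmax) (s, 0) (t, c) pE ∧ arcCost (γE γ) pE = L} m :=
  constrained_shortest_via_expanded_general A γ σ Cmax T s hσ hcircγ
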